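/- Define T(y) = (1/6)(y^{-1} − ₂F₁(3,1;5;1−y)) for y > 0 in a neighborhood of 1 (equivalently 1−y in the unit disc extended by analytic continuation to y > 0). Then T satisfies the functional equation T(y) + y^{-2} T(y^{-1}) = 0. -/

import Mathlib

open MeasureTheory

/-- The Gauss hypergeometric function `₂F₁(a,b;c;z)` for real `z < 1`, defined by
its Euler integral representation (valid for `Re c > Re b > 0`). -/
noncomputable def gauss2F1 (a b c : ℂ) (z : ℝ) : ℂ :=
  Complex.Gamma c / (Complex.Gamma b * Complex.Gamma (c - b)) *
    ∫ t in Set.Ioo (0 : ℝ) 1,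
      (t : ℂ) ^ (b - 1) * ((1 - t : ℝ) : ℂ) ^ (c - b - 1) *
        ((1 - z * t : ℝ) : ℂ) ^ (-a)

/-- `T(y) = (1/6)(y⁻¹ − ₂F₁(3,1;5;1−y))`. -/
noncomputable def Tfun (y : ℝ) : ℂ :=
  (1 / 6 : ℂ) * ((y : ℂ)⁻¹ - gauss2F1 3 1 5 (1 - y))

lemma gauss_eq (y : ℝ) :
    gauss2F1 3 1 5 (1 - y) =
      4 * ((∫ t in (0:ℝ)..1, (1 - t) ^ 3 / (1 - (1 - y) * t) ^ 3 : ℝ) : ℂ) := by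
  unfold gauss2F1
  have hG5 : Complex.Gamma 5 = 24 := by
    rw [(by norm_num : (5:ℂ) = (4:ℕ) + 1), Complex.Gamma_nat_eq_factorial]
    norm_num [Nat.factorial]
  have hG1 : Complex.Gamma 1 = 1 := Complex.Gamma_one
  have hG4 : Complex.Gamma ((5:ℂ) - 1) = 6 := by
    rw [(by norm_num : (5:ℂ) - 1 = (3:ℕ) + 1), Complex.Gamma_nat_eq_factorial]
    norm_num [Nat.factorial]
  rw [hG5, hG1, hG4]
  have hint : ∫ t in Set.Ioo (0:ℝ) 1,
      (t : ℂ) ^ ((1:ℂ) - 1) * ((1 - t : ℝ) : ℂ) ^ ((5:ℂ) - 1 - 1) *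
        ((1 - (1 - y) * t : ℝ) : ℂ) ^ (-(3:ℂ))
      = ((∫ t in (0:ℝ)..1, (1 - t) ^ 3 / (1 - (1 - y) * t) ^ 3 : ℝ) : ℂ) := by
    rw [intervalIntegral.integral_of_le (by norm_num : (0:ℝ) ≤ 1),
      MeasureTheory.integral_Ioc_eq_integral_Ioo]
    rw [show ((∫ t in Set.Ioo (0:ℝ) 1, (1 - t) ^ 3 / (1 - (1 - y) * t) ^ 3 : ℝ) : ℂ)
        = ∫ t in Set.Ioo (0:ℝ) 1, (((1 - t) ^ 3 / (1 - (1 - y) * t) ^ 3 : ℝ) : ℂ) from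
      (integral_ofReal (𝕜 := ℂ)).symm]
    refine setIntegral_congr_fun measurableSet_Ioo (fun t _ => ?_)
    have h1 : (1:ℂ) - 1 = 0 := by norm_num
    have h2 : (5:ℂ) - 1 - 1 = ((3:ℕ):ℂ) := by norm_num
    have h3 : (3:ℂ) = ((3:ℕ):ℂ) := by norm_num
    rw [h1, h2, Complex.cpow_zero, Complex.cpow_natCast, h3, Complex.cpow_neg,
      Complex.cpow_natCast]
    push_cast
    ring
  rw [hint]
  norm_num

lemma upos {y t : ℝ} (hy : 0 < y) (ht0 : 0 ≤ t) (ht1 : t ≤ 1) :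
    0 < 1 - (1 - y) * t := by
  rcases eq_or_lt_of_le ht1 with h | h
  · rw [← h]; nlinarith
  · nlinarith [mul_nonneg hy.le ht0]

lemma integral_value (y : ℝ) (hy : 0 < y) (hy1 : y ≠ 1) :
    ∫ t in (0:ℝ)..1, (1 - t) ^ 3 / (1 - (1 - y) * t) ^ 3
      = (y ^ 3 / 2 - 3 * y ^ 2 + 3 * y / 2 + 1 + 3 * y * Real.log y) / (y - 1) ^ 4 := by
  have ha : y - 1 ≠ 0 := sub_ne_zero.mpr hy1
  set F : ℝ → ℝ := fun t =>
    (y - 1)⁻¹ ^ 4 * (-(y ^ 3 / 2) * ((1 - (1 - y) * t) ^ 2)⁻¹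
      + 3 * y ^ 2 * (1 - (1 - y) * t)⁻¹ + 3 * y * Real.log (1 - (1 - y) * t)
      - (1 - (1 - y) * t)) with hF
  have key : ∫ t in (0:ℝ)..1, (1 - t) ^ 3 / (1 - (1 - y) * t) ^ 3 = F 1 - F 0 := by
    refine intervalIntegral.integral_eq_sub_of_hasDerivAt (fun t ht => ?_) ?_
    · rw [Set.uIcc_of_le (by norm_num : (0:ℝ) ≤ 1)] at ht
      have hu : 0 < 1 - (1 - y) * t := upos hy ht.1 ht.2
      have hu' : HasDerivAt (fun s : ℝ => 1 - (1 - y) * s) (y - 1) t := by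
        simpa using ((hasDerivAt_id t).const_mul (1 - y)).const_sub 1
      have h2 : HasDerivAt (fun s : ℝ => ((1 - (1 - y) * s) ^ 2)⁻¹)
          (-(↑2 * (1 - (1 - y) * t) ^ (2 - 1) * (y - 1)) / ((1 - (1 - y) * t) ^ 2) ^ 2) t :=
        (hu'.pow 2).inv (pow_ne_zero 2 hu.ne')
      have h3 : HasDerivAt (fun s : ℝ => (1 - (1 - y) * s)⁻¹)
          (-(y - 1) / (1 - (1 - y) * t) ^ 2) t := hu'.inv hu.ne'
      have h4 : HasDerivAt (fun s : ℝ => Real.log (1 - (1 - y) * s))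
          ((y - 1) / (1 - (1 - y) * t)) t := hu'.log hu.ne'
      have hD := ((((h2.const_mul (-(y ^ 3 / 2))).add (h3.const_mul (3 * y ^ 2))).add
        (h4.const_mul (3 * y))).sub hu').const_mul ((y - 1)⁻¹ ^ 4)
      convert hD using 1
      · rfl
      · rfl
      have hu2 : 1 - t * (1 - y) ≠ 0 := by rw [mul_comm]; exact hu.ne'
      field_simp
      ring
    · apply ContinuousOn.intervalIntegrable
      apply ContinuousOn.div (by fun_prop) (by fun_prop)
      intro t ht
      rw [Set.uIcc_of_le (by norm_num : (0:ℝ) ≤ 1)] at ht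
      exact pow_ne_zero 3 (upos hy ht.1 ht.2).ne'
  rw [key]
  simp only [hF]
  norm_num
  field_simp
  ring

lemma gauss_val (y : ℝ) (hy : 0 < y) (hy1 : y ≠ 1) :
    gauss2F1 3 1 5 (1 - y) =
      ((4 * (y ^ 3 / 2 - 3 * y ^ 2 + 3 * y / 2 + 1 + 3 * y * Real.log y) / (y - 1) ^ 4 : ℝ) : ℂ) := by
  rw [gauss_eq, integral_value y hy hy1]
  push_cast
  ring

/-- The functional equation `T(y) + y⁻² T(y⁻¹) = 0` for all `y > 0`. -/
theorem stmt17 (y : ℝ) (hy : 0 < y) :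
    Tfun y + ((y : ℂ) ^ 2)⁻¹ * Tfun y⁻¹ = 0 := by
  rcases eq_or_ne y 1 with rfl | hy1
  · have h : gauss2F1 3 1 5 (1 - 1) = 1 := by
      rw [gauss_eq]
      have : ∫ t in (0:ℝ)..1, (1 - t) ^ 3 / (1 - (1 - 1) * t) ^ 3
          = ∫ t in (0:ℝ)..1, (1 - t) ^ 3 := by
        refine intervalIntegral.integral_congr (fun t _ => ?_)
        norm_num
      rw [this, intervalIntegral.integral_comp_sub_left (fun x => x ^ 3) 1]
      norm_num
    norm_num at h
    simp [Tfun, h]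
  · have hyi : (0:ℝ) < y⁻¹ := by positivity
    have hyi1 : y⁻¹ ≠ 1 := by
      simpa [inv_eq_one] using hy1
    have h1 := gauss_val y hy hy1
    have h2 := gauss_val y⁻¹ hyi hyi1
    rw [Real.log_inv] at h2
    have ha : y - 1 ≠ 0 := sub_ne_zero.mpr hy1
    have hr : 4 * (y⁻¹ ^ 3 / 2 - 3 * y⁻¹ ^ 2 + 3 * y⁻¹ / 2 + 1 + 3 * y⁻¹ * -Real.log y)
        / (y⁻¹ - 1) ^ 4
        = (2 * y - 12 * y ^ 2 + 6 * y ^ 3 + 4 * y ^ 4 - 12 * y ^ 3 * Real.log y)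
          / (y - 1) ^ 4 := by
      have h4 : (y⁻¹ - 1) ^ 4 = (y - 1) ^ 4 / y ^ 4 := by
        rw [show y⁻¹ - 1 = (1 - y) / y by field_simp, div_pow]
        congr 1
        ring
      rw [h4, div_div_eq_mul_div]
      congr 1
      field_simp
      ring
    rw [hr] at h2
    have hy0 : (y:ℂ) ≠ 0 := by exact_mod_cast hy.ne'
    have hy1' : (y:ℂ) ≠ 1 := by exact_mod_cast hy1
    have hym1 : (y:ℂ) - 1 ≠ 0 := sub_ne_zero.mpr hy1'
    unfold Tfun
    rw [h1, h2]
    push_cast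
    have hd : ((y:ℂ) - 1) ^ 4 ≠ 0 := pow_ne_zero _ hym1
    field_simp [hy0, hd]
    ring
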